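/- Let d1, d2, K, β be positive real numbers. There exists a pair (f,m) of strictly positive real numbers satisfying the steady-state system F1(f,m) = 0 and F2(f,m) = 0 if and only if β ≥ β0 = 8(d1+d2)/K. -/

import Mathlib

/-!
At a positive steady state the factors `f` and `m` cancel from `F₁ = 0` and `F₂ = 0`, leaving
`(β/2) m g = d₁` and `(β/2) f g = d₂`. Adding them, the total population `s = f + m` satisfies
`(β/2) s (1 - s/K) = d₁ + d₂`, and since the logistic term `s (1 - s/K)` has maximum `K/4`
this is solvable exactly when `β K / 8 ≥ d₁ + d₂`. Conversely, a root `s` of that quadratic is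
split as `f : m = d₂ : d₁` to give a steady state.
-/

theorem mul_one_sub_div_le {K : ℝ} (hK : 0 < K) (s : ℝ) : s * (1 - s / K) ≤ K / 4 := by
  have : s * (1 - s / K) = K / 4 - (s - K / 2) ^ 2 / K := by field_simp; ring
  rw [this]
  linarith [div_nonneg (sq_nonneg (s - K / 2)) hK.le]

theorem exists_pos_mul_one_sub_div_eq {K c : ℝ} (hK : 0 < K) (hc : c ≤ K / 4) :
    ∃ s, 0 < s ∧ s * (1 - s / K) = c := by
  have hdisc : 0 ≤ K ^ 2 - 4 * K * c := by nlinarith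
  set r := Real.sqrt (K ^ 2 - 4 * K * c)
  have hr : r ^ 2 = K ^ 2 - 4 * K * c := Real.sq_sqrt hdisc
  refine ⟨(K + r) / 2, by positivity, ?_⟩
  field_simp
  linear_combination -hr

theorem mul_mul_mul_sub_eq_zero_and_iff {a f m g d₁ d₂ : ℝ} (hf : f ≠ 0) (hm : m ≠ 0) :
    (a * f * m * g - d₁ * f = 0 ∧ a * f * m * g - d₂ * m = 0) ↔
      (a * m * g = d₁ ∧ a * f * g = d₂) := by
  have h₁ : a * f * m * g - d₁ * f = f * (a * m * g - d₁) := by ring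
  have h₂ : a * f * m * g - d₂ * m = m * (a * f * g - d₂) := by ring
  rw [h₁, h₂, mul_eq_zero_iff_left hf, mul_eq_zero_iff_left hm, sub_eq_zero, sub_eq_zero]

/-- There exists a strictly positive steady state `(f,m)` of the system
`F₁(f,m) = 0`, `F₂(f,m) = 0` iff `β ≥ β₀ = 8(d₁+d₂)/K`. -/
theorem stmt13 (d1 d2 K β : ℝ) (hd1 : 0 < d1) (hd2 : 0 < d2) (hK : 0 < K) (hβ : 0 < β) :
    (∃ f m : ℝ, 0 < f ∧ 0 < m ∧
        β / 2 * f * m * (1 - (f + m) / K) - d1 * f = 0 ∧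
        β / 2 * f * m * (1 - (f + m) / K) - d2 * m = 0) ↔
      β ≥ 8 * (d1 + d2) / K := by
  rw [ge_iff_le, div_le_iff₀ hK]
  constructor
  · rintro ⟨f, m, hf, hm, h⟩
    obtain ⟨h₁, h₂⟩ := (mul_mul_mul_sub_eq_zero_and_iff hf.ne' hm.ne').1 h
    have hsum : d1 + d2 = β / 2 * ((f + m) * (1 - (f + m) / K)) := by
      linear_combination -h₁ - h₂
    have := mul_le_mul_of_nonneg_left (mul_one_sub_div_le hK (f + m)) (half_pos hβ).le
    linarith
  · intro hb
    have hd : 0 < d1 + d2 := by positivity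
    obtain ⟨s, hs, hsK⟩ :=
      exists_pos_mul_one_sub_div_eq (c := 2 * (d1 + d2) / β) hK (by rw [div_le_iff₀ hβ]; linarith)
    refine ⟨d2 * s / (d1 + d2), d1 * s / (d1 + d2), by positivity, by positivity,
      (mul_mul_mul_sub_eq_zero_and_iff (by positivity) (by positivity)).2 ⟨?_, ?_⟩⟩ <;>
    · rw [← add_div, ← add_mul, add_comm d2, mul_div_cancel_left₀ s hd.ne']
      field_simp at hsK ⊢
      linear_combination hsK
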